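/- For every even natural number k ≥ 2, there is a maximum k-edge-colorable subgraph of K_{k+1} (with k^2/2 edges) whose complement within E(K_{k+1}) is a matching. -/

import Mathlib

/-- A proper edge coloring of (the edges of) `G` using colors `< k`. -/
def IsProperEdgeColoring {V : Type*} (G : SimpleGraph V) (k : ℕ) (c : Sym2 V → ℕ) : Prop :=
  (∀ e ∈ G.edgeSet, c e < k) ∧
  ∀ e₁ ∈ G.edgeSet, ∀ e₂ ∈ G.edgeSet, e₁ ≠ e₂ → (∃ v, v ∈ e₁ ∧ v ∈ e₂) → c e₁ ≠ c e₂

/-!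
Identify the vertices of `K_{k+1}` with the cyclic group `ℤ/(k+1)` and colour the edge `ab` by
`a + b`. Two edges at a common vertex `v` with the same colour have the same other endpoint, so
this colouring is proper on every graph. Delete the `k/2` edges `{a, -a}` of colour `0`: since
`k + 1` is odd, `-a ≠ a` for `a ≠ 0`, so these edges form a perfect matching of the nonzero
vertices, and the remaining `(k+1)k/2 - k/2 = k²/2` edges use only the `k` nonzero colours.
-/

open Finset

theorem neg_ne_self_of_odd_card {G : Type*} [AddGroup G] (hG : Odd (Nat.card G)) {v : G}
    (hv : v ≠ 0) : -v ≠ v := by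
  -- `v ↦ 2 • v` is injective because `2` is coprime to the order of `G`.
  intro h
  apply hv
  apply (nsmulCoprime hG.coprime_two_right).injective
  rw [nsmulCoprime_apply, nsmulCoprime_apply, two_nsmul, smul_zero]
  nth_rw 1 [← h]
  exact neg_add_cancel v

section EdgeSum

variable {G : Type*} [AddCommGroup G]

def edgeSum : Sym2 G → G :=
  Sym2.lift ⟨(· + ·), add_comm⟩

@[simp]
theorem edgeSum_mk (a b : G) : edgeSum s(a, b) = a + b :=
  rfl

theorem Sym2.eq_of_mem_of_mem_of_edgeSum_eq {v : G} {e₁ e₂ : Sym2 G} (h₁ : v ∈ e₁)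
    (h₂ : v ∈ e₂) (hsum : edgeSum e₁ = edgeSum e₂) : e₁ = e₂ := by
  rw [← Sym2.other_spec h₁, ← Sym2.other_spec h₂] at hsum ⊢
  rw [edgeSum_mk, edgeSum_mk] at hsum
  rw [add_left_cancel hsum]

end EdgeSum

section SumNeZeroGraph

variable (G : Type*) [AddCommGroup G]

def sumNeZeroGraph : SimpleGraph G where
  Adj a b := a ≠ b ∧ a + b ≠ 0
  symm := ⟨fun _ _ h => ⟨h.1.symm, by rw [add_comm]; exact h.2⟩⟩
  loopless := ⟨fun _ h => h.1 rfl⟩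

instance [DecidableEq G] : DecidableRel (sumNeZeroGraph G).Adj :=
  fun a b => inferInstanceAs (Decidable (a ≠ b ∧ a + b ≠ 0))

variable {G}

theorem sumNeZeroGraph_adj {a b : G} : (sumNeZeroGraph G).Adj a b ↔ a ≠ b ∧ a + b ≠ 0 :=
  Iff.rfl

theorem mem_edgeSet_sumNeZeroGraph {e : Sym2 G} :
    e ∈ (sumNeZeroGraph G).edgeSet ↔ ¬e.IsDiag ∧ edgeSum e ≠ 0 := by
  induction e using Sym2.ind with
  | _ a b => rw [SimpleGraph.mem_edgeSet, Sym2.mk_isDiag_iff, edgeSum_mk]; rfl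

theorem sumNeZeroGraph_le_top : sumNeZeroGraph G ≤ ⊤ :=
  fun _ _ h => h.1

theorem edgeSum_eq_zero_of_mem_edgeSet_top_sdiff {e : Sym2 G}
    (he : e ∈ (⊤ : SimpleGraph G).edgeSet \ (sumNeZeroGraph G).edgeSet) : edgeSum e = 0 := by
  obtain ⟨htop, hH⟩ := he
  rw [SimpleGraph.edgeSet_top, Set.mem_compl_iff, Sym2.mem_diagSet] at htop
  rw [mem_edgeSet_sumNeZeroGraph] at hH
  tauto

theorem neighborFinset_sumNeZeroGraph [Fintype G] [DecidableEq G] (v : G) :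
    (sumNeZeroGraph G).neighborFinset v = {v, -v}ᶜ := by
  ext w
  rw [SimpleGraph.mem_neighborFinset, sumNeZeroGraph_adj, mem_compl, mem_insert, mem_singleton,
    eq_neg_iff_add_eq_zero, add_comm w, eq_comm (a := w)]
  tauto

theorem two_mul_card_edgeFinset_sumNeZeroGraph [Fintype G] [DecidableEq G]
    (hG : Odd (Nat.card G)) :
    2 * #(sumNeZeroGraph G).edgeFinset = (Fintype.card G - 1) ^ 2 := by
  have hdeg (v : G) : (sumNeZeroGraph G).degree v + #{v, -v} = Fintype.card G := by
    rw [← SimpleGraph.card_neighborFinset_eq_degree, neighborFinset_sumNeZeroGraph,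
      card_compl_add_card]
  have hpair (v : G) : #{v, -v} + (if v = 0 then 1 else 0) = 2 := by
    by_cases hv : v = 0
    · simp [hv]
    · rw [card_pair (neg_ne_self_of_odd_card hG hv).symm, if_neg hv]
  have hdegs := sum_congr (s₁ := univ) rfl fun v _ => hdeg v
  have hpairs := sum_congr (s₁ := univ) rfl fun v _ => hpair v
  simp only [sum_add_distrib, sum_ite_eq', mem_univ, if_true, sum_const, card_univ,
    smul_eq_mul] at hdegs hpairs
  rw [SimpleGraph.sum_degrees_eq_twice_card_edges] at hdegs
  obtain ⟨m, hm⟩ := Nat.exists_eq_add_one_of_ne_zero (Fintype.card_ne_zero (α := G))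
  rw [hm] at hdegs hpairs ⊢
  rw [Nat.add_sub_cancel]
  nlinarith

end SumNeZeroGraph

theorem isProperEdgeColoring_sumNeZeroGraph_fin (n : ℕ) :
    IsProperEdgeColoring (sumNeZeroGraph (Fin (n + 1))) n fun e => (edgeSum e).val - 1 := by
  have hval {e : Sym2 (Fin (n + 1))} (he : e ∈ (sumNeZeroGraph _).edgeSet) :
      (edgeSum e).val ≠ 0 :=
    Fin.val_ne_zero_iff.mpr (mem_edgeSet_sumNeZeroGraph.mp he).2
  refine ⟨fun e he => ?_, fun e₁ h₁ e₂ h₂ hne ⟨v, hv₁, hv₂⟩ hc => ?_⟩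
  · show (edgeSum e).val - 1 < n
    have := hval he
    have := (edgeSum e).isLt
    omega
  · apply hne (Sym2.eq_of_mem_of_mem_of_edgeSum_eq hv₁ hv₂ (Fin.ext _))
    beta_reduce at hc
    have := hval h₁
    have := hval h₂
    omega

theorem stmt3_general (k : ℕ) (hk : Even k) :
    ∃ H : SimpleGraph (Fin (k + 1)), H ≤ SimpleGraph.completeGraph (Fin (k + 1)) ∧
      (∃ c, IsProperEdgeColoring H k c) ∧ H.edgeSet.ncard = k ^ 2 / 2 ∧
      ∀ e₁ ∈ (SimpleGraph.completeGraph (Fin (k + 1))).edgeSet \ H.edgeSet,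
        ∀ e₂ ∈ (SimpleGraph.completeGraph (Fin (k + 1))).edgeSet \ H.edgeSet,
          e₁ ≠ e₂ → ∀ v, ¬(v ∈ e₁ ∧ v ∈ e₂) := by
  refine ⟨sumNeZeroGraph _, sumNeZeroGraph_le_top, ⟨_, isProperEdgeColoring_sumNeZeroGraph_fin k⟩,
    ?_, fun e₁ h₁ e₂ h₂ hne v ⟨hv₁, hv₂⟩ => hne ?_⟩
  · have hcard := two_mul_card_edgeFinset_sumNeZeroGraph (G := Fin (k + 1))
      (by rw [Nat.card_fin]; exact hk.add_one)
    rw [Fintype.card_fin, Nat.add_sub_cancel] at hcard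
    rw [← SimpleGraph.coe_edgeFinset, Set.ncard_coe_finset]
    omega
  · refine Sym2.eq_of_mem_of_mem_of_edgeSum_eq hv₁ hv₂ ?_
    rw [edgeSum_eq_zero_of_mem_edgeSet_top_sdiff h₁, edgeSum_eq_zero_of_mem_edgeSet_top_sdiff h₂]

/-- For even `k ≥ 2`, there is a maximum `k`-edge-colorable subgraph of `K_{k+1}`
(with `k^2/2` edges) whose complement within `E(K_{k+1})` is a matching. -/
theorem stmt3 (k : ℕ) (hk : Even k) (hk2 : 2 ≤ k) :
    ∃ H : SimpleGraph (Fin (k + 1)), H ≤ SimpleGraph.completeGraph (Fin (k + 1)) ∧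
      (∃ c, IsProperEdgeColoring H k c) ∧ H.edgeSet.ncard = k ^ 2 / 2 ∧
      ∀ e₁ ∈ (SimpleGraph.completeGraph (Fin (k + 1))).edgeSet \ H.edgeSet,
        ∀ e₂ ∈ (SimpleGraph.completeGraph (Fin (k + 1))).edgeSet \ H.edgeSet,
          e₁ ≠ e₂ → ∀ v, ¬(v ∈ e₁ ∧ v ∈ e₂) :=
  stmt3_general k hk
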